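/- For every integer r ≥ 1, ∫₀¹ log^r(x) Li_{r+1}(x) / (1-x) dx = (-1)^{r+1} (r!/2) [ζ(2r+2) - ζ(r+1)²]. -/

import Mathlib

/-!
Expanding `Li_{r+1}(x) / (1 - x)` into the double series `∑_{a,b} x^(a+b+1) / (a+1)^(r+1)` and
integrating term by term with `∫₀¹ xᵐ (-log x)ʳ dx = r! / (m+1)^(r+1)` (substitute `x = e^(-t)`)
turns the integral into `(-1)ʳ r! ζ(r+1, r+1)`. Splitting `ζ(s)² = ∑_{m,n} m⁻ˢ n⁻ˢ` into the parts
above, below and on the diagonal gives `ζ(s)² = 2 ζ(s, s) + ζ(2s)`.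
-/

open MeasureTheory

/-- Polylogarithm `Li n x = ∑_{k ≥ 1} x^k / k^n` (for an integer index `n`). -/
noncomputable def Li (n : ℤ) (x : ℝ) : ℝ := ∑' k : ℕ+, x ^ (k : ℕ) / ((k : ℕ) : ℝ) ^ n

/-- Zeta value `ζ(n) = ∑_{k ≥ 1} 1 / k^n` (equals `0` at `n = 1` by divergence). -/
noncomputable def zetaR (n : ℕ) : ℝ := ∑' k : ℕ+, 1 / ((k : ℕ) : ℝ) ^ n

/-- The set of zeta values at integers `n ≥ 2`. -/
def zetaValues : Set ℝ := {x : ℝ | ∃ n : ℕ, 2 ≤ n ∧ x = zetaR n}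

open Set Real

lemma zetaR_eq_tsum (s : ℕ) : zetaR s = ∑' n : ℕ, 1 / ((n : ℝ) + 1) ^ s := by
  rw [zetaR, tsum_pnat_eq_tsum_succ (f := fun k => 1 / (k : ℝ) ^ s)]
  push_cast; rfl

lemma Li_natCast_eq_tsum (s : ℕ) (x : ℝ) :
    Li s x = ∑' n : ℕ, x ^ (n + 1) / ((n : ℝ) + 1) ^ s := by
  rw [Li, tsum_pnat_eq_tsum_succ (f := fun k => x ^ k / (k : ℝ) ^ (s : ℤ))]
  push_cast; rfl

lemma summable_one_div_succ_pow {s : ℕ} (hs : 2 ≤ s) :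
    Summable fun n : ℕ => 1 / ((n : ℝ) + 1) ^ s := by
  exact_mod_cast (summable_nat_add_iff 1).mpr (Real.summable_one_div_nat_pow.mpr hs)

section PairSums

variable {R : Type*} [NormedCommRing R] [CompleteSpace R]

lemma summable_mul_comp_add_succ {f g : ℕ → R} (hf : Summable fun n => ‖f n‖)
    (hg : Summable fun n => ‖g n‖) : Summable fun p : ℕ × ℕ => f p.1 * g (p.1 + p.2 + 1) := by
  have hinj : Function.Injective fun p : ℕ × ℕ => (p.1, p.1 + p.2 + 1) := by
    rintro ⟨a, b⟩ ⟨c, d⟩ h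
    simp only [Prod.mk.injEq] at h
    ext <;> dsimp only <;> omega
  exact ((summable_mul_of_summable_norm hf hg).comp_injective hinj :)

/-- Enumerates `{a < c}`, `{a > c}` and the diagonal of `ℕ × ℕ`. -/
noncomputable def natPairEquiv : (ℕ × ℕ) ⊕ (ℕ × ℕ) ⊕ ℕ ≃ ℕ × ℕ :=
  Equiv.ofBijective
    (Sum.elim (fun p => (p.1, p.1 + p.2 + 1))
      (Sum.elim (fun p => (p.1 + p.2 + 1, p.1)) fun n => (n, n)))
    ⟨by rintro (⟨a, b⟩ | ⟨a, b⟩ | a) (⟨c, d⟩ | ⟨c, d⟩ | c) h <;>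
      simp only [Sum.elim_inl, Sum.elim_inr, Prod.mk.injEq] at h <;> grind,
     fun ⟨a, c⟩ => by
      rcases lt_trichotomy a c with h | rfl | h
      · exact ⟨.inl (a, c - a - 1), Prod.ext rfl (show a + (c - a - 1) + 1 = c by omega)⟩
      · exact ⟨.inr (.inr a), rfl⟩
      · exact ⟨.inr (.inl (c, a - c - 1)), Prod.ext (show c + (a - c - 1) + 1 = a by omega) rfl⟩⟩

lemma tsum_sq_eq_two_mul_tsum_add_tsum_sq {f : ℕ → R} (hf : Summable fun n => ‖f n‖) :
    (∑' n, f n) ^ 2 = 2 * ∑' p : ℕ × ℕ, f p.1 * f (p.1 + p.2 + 1) + ∑' n, f n ^ 2 := by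
  set G : ℕ × ℕ → R := fun p => f p.1 * f p.2
  have hG : Summable fun i => G (natPairEquiv i) :=
    natPairEquiv.summable_iff.mpr (summable_mul_of_summable_norm hf hf)
  have hG' : Summable fun i => G (natPairEquiv (.inr i)) := hG.comp_injective Sum.inr_injective
  rw [sq, tsum_mul_tsum_of_summable_norm hf hf, ← natPairEquiv.tsum_eq G,
    Summable.tsum_sum (hG.comp_injective Sum.inl_injective) hG',
    Summable.tsum_sum (hG'.comp_injective Sum.inl_injective)
      (hG'.comp_injective Sum.inr_injective)]
  have hlt (p : ℕ × ℕ) : G (natPairEquiv (.inl p)) = f p.1 * f (p.1 + p.2 + 1) := rfl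
  have hgt (p : ℕ × ℕ) : G (natPairEquiv (.inr (.inl p))) = f p.1 * f (p.1 + p.2 + 1) :=
    mul_comm _ _
  have hdiag (n : ℕ) : G (natPairEquiv (.inr (.inr n))) = f n ^ 2 := (sq _).symm
  simp only [hlt, hgt, hdiag]
  ring

end PairSums

/-- The double zeta value `ζ(a, b) = ∑_{m > n ≥ 1} m⁻ᵃ n⁻ᵇ`, indexed by `n = p.1 + 1` and
`m = p.1 + p.2 + 2`. -/
noncomputable def doubleZeta (a b : ℕ) : ℝ :=
  ∑' p : ℕ × ℕ, 1 / ((p.1 : ℝ) + 1) ^ b * (1 / (((p.1 + p.2 + 1 : ℕ) : ℝ) + 1) ^ a)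

theorem zetaR_sq {s : ℕ} (hs : 2 ≤ s) : zetaR s ^ 2 = 2 * doubleZeta s s + zetaR (2 * s) := by
  rw [zetaR_eq_tsum, zetaR_eq_tsum,
    tsum_sq_eq_two_mul_tsum_add_tsum_sq (summable_one_div_succ_pow hs).norm]
  simp only [div_pow, one_pow, ← pow_mul, mul_comm s 2]
  rfl

lemma integral_Ioo_zero_one_eq_integral_exp_neg {E : Type*} [NormedAddCommGroup E]
    [NormedSpace ℝ E] (g : ℝ → E) :
    ∫ x in Ioo 0 1, g x = ∫ t in Ioi 0, exp (-t) • g (exp (-t)) := by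
  have himage : (fun t => exp (-t)) '' Ioi 0 = Ioo 0 1 := by
    rw [← Set.image_image exp Neg.neg, Set.image_neg_Ioi, neg_zero, image_exp_Iio, exp_zero]
  rw [← himage, integral_image_eq_integral_abs_deriv_smul measurableSet_Ioi
    (fun t _ => (hasDerivAt_neg t).exp.hasDerivWithinAt)
    (fun a _ b _ h => neg_injective (exp_injective h))]
  simp only [mul_neg, mul_one, abs_neg, abs_of_pos (exp_pos _)]

theorem integral_pow_mul_neg_log_pow (m k : ℕ) :
    ∫ x in Ioo 0 1, x ^ m * (-log x) ^ k = k.factorial / ((m : ℝ) + 1) ^ (k + 1) := by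
  have hsubst (t : ℝ) : exp (-t) • (exp (-t) ^ m * (-log (exp (-t))) ^ k)
      = t ^ ((k + 1 : ℝ) - 1) * exp (-((m + 1) * t)) := by
    rw [log_exp, neg_neg, smul_eq_mul, ← exp_nat_mul, ← mul_assoc, ← exp_add,
      add_sub_cancel_right, rpow_natCast]
    ring_nf
  simp_rw [integral_Ioo_zero_one_eq_integral_exp_neg, hsubst]
  rw [integral_rpow_mul_exp_neg_mul_Ioi (by positivity) (by positivity),
    Gamma_nat_eq_factorial, ← Nat.cast_add_one k, rpow_natCast, one_div, inv_pow]
  ring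

theorem integrableOn_pow_mul_neg_log_pow (m k : ℕ) :
    IntegrableOn (fun x => x ^ m * (-log x) ^ k) (Ioo 0 1) :=
  -- the Bochner integral of a non-integrable function vanishes
  Integrable.of_integral_ne_zero (by rw [integral_pow_mul_neg_log_pow]; positivity)

theorem Li_div_one_sub_eq_tsum (n : ℕ) {x : ℝ} (hx : |x| < 1) :
    Li n x / (1 - x) = ∑' p : ℕ × ℕ, x ^ (p.1 + p.2 + 1) / ((p.1 : ℝ) + 1) ^ n := by
  have hgeo := summable_geometric_of_lt_one (abs_nonneg x) hx
  have hLi : Summable fun k : ℕ => ‖x ^ (k + 1) / ((k : ℝ) + 1) ^ n‖ := by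
    refine Summable.of_nonneg_of_le (fun _ => norm_nonneg _) (fun k => ?_) (hgeo.mul_left |x|)
    rw [norm_div, norm_pow, norm_pow, Real.norm_eq_abs, ← pow_succ']
    exact div_le_self (by positivity)
      (one_le_pow₀ ((le_add_of_nonneg_left k.cast_nonneg).trans (le_abs_self _)))
  rw [Li_natCast_eq_tsum, div_eq_mul_inv, ← tsum_geometric_of_abs_lt_one hx,
    tsum_mul_tsum_of_summable_norm hLi (by simpa using hgeo)]
  refine tsum_congr fun p => ?_
  ring

lemma integral_tsum_of_nonneg {α ι : Type*} [MeasurableSpace α] {μ : Measure α} [Countable ι]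
    {F : ι → α → ℝ} (hF_int : ∀ i, Integrable (F i) μ) (hF_nonneg : ∀ i, 0 ≤ᵐ[μ] F i)
    (hF_sum : Summable fun i => ∫ a, F i a ∂μ) :
    ∫ a, ∑' i, F i a ∂μ = ∑' i, ∫ a, F i a ∂μ := by
  refine (integral_tsum_of_summable_integral_norm hF_int (hF_sum.congr fun i => ?_)).symm
  exact integral_congr_ae ((hF_nonneg i).mono fun a ha => (Real.norm_of_nonneg ha).symm)

theorem integral_neg_log_pow_mul_Li_div_one_sub {k n : ℕ} (hk : 1 ≤ k) (hn : 2 ≤ n) :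
    ∫ x in Ioo 0 1, (-log x) ^ k * Li n x / (1 - x) = k.factorial * doubleZeta (k + 1) n := by
  set F : ℕ × ℕ → ℝ → ℝ := fun p x => x ^ (p.1 + p.2 + 1) * (-log x) ^ k / ((p.1 : ℝ) + 1) ^ n
  have hF_integral (p : ℕ × ℕ) : ∫ x in Ioo 0 1, F p x = k.factorial *
      (1 / ((p.1 : ℝ) + 1) ^ n * (1 / (((p.1 + p.2 + 1 : ℕ) : ℝ) + 1) ^ (k + 1))) := by
    rw [integral_div, integral_pow_mul_neg_log_pow]
    ring
  have hF_nonneg (p : ℕ × ℕ) : 0 ≤ᵐ[volume.restrict (Ioo 0 1)] F p := by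
    filter_upwards [ae_restrict_mem measurableSet_Ioo] with x hx
    have : 0 ≤ -log x := neg_nonneg.mpr (log_nonpos hx.1.le hx.2.le)
    have : 0 ≤ x := hx.1.le
    positivity
  have hF_sum : Summable fun p => ∫ x in Ioo 0 1, F p x := by
    simp only [hF_integral]
    exact (summable_mul_comp_add_succ (summable_one_div_succ_pow hn).norm
      (summable_one_div_succ_pow (by omega : 2 ≤ k + 1)).norm).mul_left _
  calc ∫ x in Ioo 0 1, (-log x) ^ k * Li n x / (1 - x)
      = ∫ x in Ioo 0 1, ∑' p, F p x := by
        refine setIntegral_congr_fun measurableSet_Ioo fun x hx => ?_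
        rw [mul_div_assoc, Li_div_one_sub_eq_tsum n (abs_lt.mpr ⟨by linarith [hx.1], hx.2⟩),
          ← tsum_mul_left]
        exact tsum_congr fun p => by ring
    _ = ∑' p, ∫ x in Ioo 0 1, F p x :=
        integral_tsum_of_nonneg (fun p => (integrableOn_pow_mul_neg_log_pow _ _).div_const _)
          hF_nonneg hF_sum
    _ = k.factorial * doubleZeta (k + 1) n := by
        simp only [hF_integral, tsum_mul_left, doubleZeta]

/-- For every integer `r ≥ 1`,
`∫₀¹ log^r(x) Li_{r+1}(x)/(1-x) dx = (-1)^(r+1)(r!/2)(ζ(2r+2) - ζ(r+1)²)`. -/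
theorem stmt16 (r : ℕ) (hr : 1 ≤ r) :
    (∫ x in (0:ℝ)..1, Real.log x ^ r * Li (r + 1) x / (1 - x))
      = (-1) ^ (r + 1) * ((r.factorial : ℝ) / 2) * (zetaR (2 * r + 2) - zetaR (r + 1) ^ 2) := by
  have hsign (x : ℝ) : log x ^ r * Li (r + 1) x / (1 - x)
      = (-1) ^ r * ((-log x) ^ r * Li (r + 1 : ℕ) x / (1 - x)) := by
    have hsq : (-1 : ℝ) ^ r * (-1) ^ r = 1 := by rw [← mul_pow]; norm_num
    rw [neg_pow]
    push_cast
    linear_combination (-(log x ^ r * Li (r + 1) x / (1 - x))) * hsq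
  have hintegral := integral_neg_log_pow_mul_Li_div_one_sub hr (by omega : 2 ≤ r + 1)
  have hzeta := zetaR_sq (by omega : 2 ≤ r + 1)
  rw [intervalIntegral.integral_of_le zero_le_one, integral_Ioc_eq_integral_Ioo]
  simp_rw [hsign, integral_const_mul, hintegral, show 2 * r + 2 = 2 * (r + 1) by ring, hzeta]
  ring
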